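/- arXiv:1709.00534 — 3 statements merged into one kernel-verified Lean document; each statement's English description precedes it below -/
import Mathlib

section
/- Let B ∈ ℝ and let r₁, r₂, r₃ be real numbers such that p_B(x) = (x - r₁)(x - r₂)(x - r₃) for all real x. Then cbrt(r₁) + cbrt(r₂) + cbrt(r₃) = cbrt( (3+B)/2 - 6 + 3·cbrt((27 + B²)/4) ). -/
/-- The Ramanujan simple cubic with parameter `B`, evaluated at `x`. -/
noncomputable def pB (B x : ℝ) : ℝ := x ^ 3 - ((3 + B) / 2) * x ^ 2 - ((3 - B) / 2) * x + 1

/-- The real cube root of a real number. -/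
noncomputable def cbrt (t : ℝ) : ℝ := Real.sign t * |t| ^ ((1 : ℝ) / 3)

lemma cube_cbrt (t : ℝ) : cbrt t ^ 3 = t := by
  unfold cbrt
  have habs : (|t| ^ ((1 : ℝ) / 3)) ^ (3 : ℕ) = |t| := by
    rw [← Real.rpow_natCast (|t| ^ ((1 : ℝ) / 3)) 3, ← Real.rpow_mul (abs_nonneg t)]
    norm_num
  rw [mul_pow, habs]
  rcases lt_trichotomy t 0 with h | h | h
  · rw [Real.sign_of_neg h, abs_of_neg h]; ring
  · simp [h, Real.sign_zero]
  · rw [Real.sign_of_pos h, abs_of_pos h]; ring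

lemma cbrt_cube (x : ℝ) : cbrt (x ^ 3) = x := by
  have hmono : StrictMono fun a : ℝ => a ^ 3 := Odd.strictMono_pow (by decide)
  exact hmono.injective (cube_cbrt (x ^ 3))

theorem stmt_2 (B r₁ r₂ r₃ : ℝ)
    (hroots : ∀ x : ℝ, pB B x = (x - r₁) * (x - r₂) * (x - r₃)) :
    cbrt r₁ + cbrt r₂ + cbrt r₃ =
      cbrt ((3 + B) / 2 - 6 + 3 * cbrt ((27 + B ^ 2) / 4)) := by
  have h0 := hroots 0
  have h1 := hroots 1
  have hm1 := hroots (-1)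
  simp only [pB] at h0 h1 hm1
  have he1 : r₁ + r₂ + r₃ = (3 + B) / 2 := by
    linear_combination (-1 : ℝ) * h0 + (1 / 2 : ℝ) * h1 + (1 / 2 : ℝ) * hm1
  have he2 : r₁ * r₂ + r₁ * r₃ + r₂ * r₃ = (B - 3) / 2 := by
    linear_combination (-1 / 2 : ℝ) * h1 + (1 / 2 : ℝ) * hm1
  have he3 : r₁ * r₂ * r₃ = -1 := by linear_combination h0
  set a := cbrt r₁ with ha
  set b := cbrt r₂ with hb
  set c := cbrt r₃ with hc
  have ha3 : a ^ 3 = r₁ := cube_cbrt r₁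
  have hb3 : b ^ 3 = r₂ := cube_cbrt r₂
  have hc3 : c ^ 3 = r₃ := cube_cbrt r₃
  have hmono : StrictMono fun x : ℝ => x ^ 3 := Odd.strictMono_pow (by decide)
  have habc : a * b * c = -1 := by
    have : (a * b * c) ^ 3 = (-1 : ℝ) ^ 3 := by
      linear_combination b ^ 3 * c ^ 3 * ha3 + r₁ * c ^ 3 * hb3 + r₁ * r₂ * hc3 + he3
    exact hmono.injective this
  set s := a + b + c with hs
  set t := a * b + b * c + c * a with ht
  set u := s * t with hu
  have hs3 : s ^ 3 = (3 + B) / 2 + 3 * u + 3 := by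
    linear_combination ha3 + hb3 + hc3 + he1 + (-3 : ℝ) * habc
  have hab : (a * b) ^ 3 = r₁ * r₂ := by linear_combination b ^ 3 * ha3 + r₁ * hb3
  have hbc : (b * c) ^ 3 = r₂ * r₃ := by linear_combination c ^ 3 * hb3 + r₂ * hc3
  have hca : (c * a) ^ 3 = r₃ * r₁ := by linear_combination a ^ 3 * hc3 + r₃ * ha3
  have ht3 : t ^ 3 = (B - 3) / 2 - 3 * u - 3 := by
    linear_combination hab + hbc + hca + he2 + (3 * t * s - 3 * (a * b * c - 1)) * habc
  have hu3 : (u + 3) ^ 3 = (27 + B ^ 2) / 4 := by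
    linear_combination t ^ 3 * hs3 + ((3 + B) / 2 + 3 + 3 * u) * ht3
  have hc1 : cbrt ((27 + B ^ 2) / 4) = u + 3 := by rw [← hu3, cbrt_cube]
  have harg : (3 + B) / 2 - 6 + 3 * cbrt ((27 + B ^ 2) / 4) = s ^ 3 := by
    rw [hc1, hs3]; ring
  rw [harg, cbrt_cube]
end

section
/- Let B ∈ ℝ with B > 0, and for each integer k define s_k = (1/3)·( (3+B)/2 + √(27 + B²)·cos( kπ/3 + (1/3)·arctan(3√3 / B) ) ). Then p_B(x) = (x - s₂)(x - s₄)(x - s₆) for all real x; that is, the roots of p_B are s₂, s₄, s₆. -/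
theorem stmt_3 (B : ℝ) (hB : 0 < B) (s : ℤ → ℝ)
    (hs : ∀ k : ℤ, s k = (1 / 3) * ((3 + B) / 2 +
      Real.sqrt (27 + B ^ 2) *
        Real.cos ((k : ℝ) * Real.pi / 3 + (1 / 3) * Real.arctan (3 * Real.sqrt 3 / B)))) :
    ∀ x : ℝ, pB B x = (x - s 2) * (x - s 4) * (x - s 6) := by
  set θ : ℝ := (1 / 3) * Real.arctan (3 * Real.sqrt 3 / B) with hθ
  set R : ℝ := Real.sqrt (27 + B ^ 2) with hRdef
  set c : ℝ := Real.cos θ with hcdef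
  set sn : ℝ := Real.sin θ with hsndef
  set r : ℝ := Real.sqrt 3 with hrdef
  have hB' : B ≠ 0 := ne_of_gt hB
  have hsq3 : r ^ 2 = 3 := Real.sq_sqrt (by norm_num)
  have hRsq : R ^ 2 = 27 + B ^ 2 := Real.sq_sqrt (by positivity)
  have hpyth : sn ^ 2 + c ^ 2 = 1 := Real.sin_sq_add_cos_sq θ
  have htriple : R * (4 * c ^ 3 - 3 * c) = B := by
    have h3θ : Real.cos (3 * θ) = 4 * c ^ 3 - 3 * c := Real.cos_three_mul θ
    have harg : 3 * θ = Real.arctan (3 * r / B) := by rw [hθ]; ring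
    have hval : 1 + (3 * r / B) ^ 2 = (27 + B ^ 2) / B ^ 2 := by
      field_simp
      nlinarith [hsq3]
    have hcos3 : Real.cos (3 * θ) = B / R := by
      rw [harg, Real.cos_arctan, hval, Real.sqrt_div (by positivity) (B ^ 2),
        Real.sqrt_sq hB.le, hRdef]
      rw [one_div, inv_div]
    have hRpos : 0 < R := by
      rw [hRdef]; positivity
    rw [← h3θ, hcos3]
    field_simp
  have hc2 : Real.cos ((2 : ℝ) * Real.pi / 3 + θ) = -(1 / 2) * c - (r / 2) * sn := by
    have h : (2 : ℝ) * Real.pi / 3 = Real.pi - Real.pi / 3 := by ring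
    rw [Real.cos_add, h, Real.cos_pi_sub, Real.sin_pi_sub, Real.cos_pi_div_three,
      Real.sin_pi_div_three, hcdef, hsndef, hrdef]
  have hc4 : Real.cos ((4 : ℝ) * Real.pi / 3 + θ) = -(1 / 2) * c + (r / 2) * sn := by
    have h : (4 : ℝ) * Real.pi / 3 = Real.pi + Real.pi / 3 := by ring
    rw [Real.cos_add, h, Real.cos_add, Real.sin_add, Real.cos_pi, Real.sin_pi,
      Real.cos_pi_div_three, Real.sin_pi_div_three, hcdef, hsndef, hrdef]
    ring
  have hc6 : Real.cos ((6 : ℝ) * Real.pi / 3 + θ) = c := by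
    have h : (6 : ℝ) * Real.pi / 3 + θ = θ + 2 * Real.pi := by ring
    rw [h, Real.cos_add_two_pi, hcdef]
  have hs2 : s 2 = (1 / 3) * ((3 + B) / 2 + R * (-(1 / 2) * c - (r / 2) * sn)) := by
    rw [hs 2]; push_cast; rw [hc2]
  have hs4 : s 4 = (1 / 3) * ((3 + B) / 2 + R * (-(1 / 2) * c + (r / 2) * sn)) := by
    rw [hs 4]; push_cast; rw [hc4]
  have hs6 : s 6 = (1 / 3) * ((3 + B) / 2 + R * c) := by
    rw [hs 6]; push_cast; rw [hc6]
  have h1 : s 2 + s 4 + s 6 = (3 + B) / 2 := by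
    rw [hs2, hs4, hs6]; ring
  have h2 : s 2 * s 4 + s 2 * s 6 + s 4 * s 6 = (B - 3) / 2 := by
    rw [hs2, hs4, hs6]
    linear_combination (-(R ^ 2 * sn ^ 2) / 36) * hsq3 + (-(R ^ 2) / 12) * hpyth +
      (-(1 : ℝ) / 12) * hRsq
  have h3 : s 2 * s 4 * s 6 = -1 := by
    rw [hs2, hs4, hs6]
    linear_combination (-((3 + B) / 2 * R ^ 2 * sn ^ 2 + R ^ 3 * sn ^ 2 * c) / 108) * hsq3 +
      (-((3 + B) / 2 * R ^ 2 + R ^ 3 * c) / 36) * hpyth + (R ^ 2 / 108) * htriple +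
      (-((3 + B) / 2) / 36 + B / 108) * hRsq
  intro x
  simp only [pB]
  linear_combination x ^ 2 * h1 - x * h2 + h3
end

section
/- Let B ∈ ℝ with B < 0, and for each integer k define s_k = (1/3)·( (3+B)/2 + √(27 + B²)·cos( kπ/3 + (1/3)·arctan(3√3 / B) ) ). Then p_B(x) = (x - s₁)(x - s₃)(x - s₅) for all real x; that is, the roots of p_B are s₁, s₃, s₅. -/
/-!
Viète's trigonometric solution. The shift `x = y + (3 + B)/6` depresses `p_B` to
`y³ - (27 + B²)/12 · y - B(27 + B²)/108`. By the triple-angle formula, for every `θ` the numbers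
`cos (kπ/3 + θ)`, `k = 1, 3, 5`, are the roots of `4c³ - 3c + cos 3θ`, which matches the
depressed cubic after scaling `y = (√(27 + B²)/3) c`, provided `cos 3θ = -B/√(27 + B²)`. For `B < 0`
this is exactly `cos (arctan (3√3 / B))`.
-/

open Real

theorem pB_eq_depressed (B x : ℝ) :
    pB B x = (x - (3 + B) / 6) ^ 3 - (27 + B ^ 2) / 12 * (x - (3 + B) / 6)
      - B * (27 + B ^ 2) / 108 := by
  unfold pB; ring

theorem prod_sub_cos_add_odd_mul_pi_div_three (m R θ x : ℝ) :
    (x - (m + R * cos (π / 3 + θ))) * (x - (m + R * cos (π + θ))) *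
        (x - (m + R * cos (5 * π / 3 + θ))) =
      (x - m) ^ 3 - 3 / 4 * R ^ 2 * (x - m) + R ^ 3 / 4 * cos (3 * θ) := by
  have h5 : cos (5 * π / 3 + θ) = cos (θ - π / 3) := by
    rw [← cos_add_two_pi (θ - π / 3)]; congr 1; ring
  rw [h5, cos_add, cos_sub, cos_pi_div_three, sin_pi_div_three, cos_add, cos_pi, sin_pi,
    cos_three_mul]
  have h3 : √3 ^ 2 = 3 := sq_sqrt (by norm_num)
  linear_combination (-3 / 4 * R ^ 2 * (x - m) - 3 / 4 * R ^ 3 * cos θ) * sin_sq_add_cos_sq θ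
    - R ^ 2 * sin θ ^ 2 / 4 * (x - m + R * cos θ) * h3

theorem cos_arctan_div_of_neg {B : ℝ} (c : ℝ) (hB : B < 0) :
    cos (arctan (c / B)) = -B / √(B ^ 2 + c ^ 2) := by
  rw [cos_arctan, div_pow, one_add_div (pow_ne_zero 2 hB.ne), sqrt_div (by positivity),
    sqrt_sq_eq_abs, abs_of_neg hB, one_div_div]

theorem stmt_4 (B : ℝ) (hB : B < 0) (s : ℤ → ℝ)
    (hs : ∀ k : ℤ, s k = (1 / 3) * ((3 + B) / 2 +
      Real.sqrt (27 + B ^ 2) *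
        Real.cos ((k : ℝ) * Real.pi / 3 + (1 / 3) * Real.arctan (3 * Real.sqrt 3 / B)))) :
    ∀ x : ℝ, pB B x = (x - s 1) * (x - s 3) * (x - s 5) := by
  intro x
  set θ := (1 / 3) * arctan (3 * √3 / B)
  set r := √(27 + B ^ 2)
  have hs' (k : ℤ) : s k = (3 + B) / 6 + r / 3 * cos (k * π / 3 + θ) := by rw [hs k]; ring
  have hr : r ^ 2 = 27 + B ^ 2 := sq_sqrt (by positivity)
  have h3θ : cos (3 * θ) = -B / r := by
    rw [show 3 * θ = arctan (3 * √3 / B) by ring, cos_arctan_div_of_neg _ hB, mul_pow,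
      sq_sqrt (by norm_num : (0 : ℝ) ≤ 3), show B ^ 2 + 3 ^ 2 * 3 = 27 + B ^ 2 by ring]
  have hR3 : (r / 3) ^ 3 / 4 * (-B / r) = -(B * (27 + B ^ 2) / 108) := by
    rw [← hr]; field_simp; ring
  rw [hs', hs', hs', pB_eq_depressed]
  push_cast
  rw [one_mul, show (3 : ℝ) * π / 3 = π by ring, prod_sub_cos_add_odd_mul_pi_div_three, h3θ, hR3]
  linear_combination (x - (3 + B) / 6) / 12 * hr
end
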